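/- Let d ≥ 1 and let A, e be real constants with A > 0. Let c : ℝ×ℝ^d → ℝ be C² with c > 0 everywhere, ψ : ℝ×ℝ^d → ℝ be C² in space and C¹ in time, and u : ℝ×ℝ^d → ℝ^d be C¹. Assume pointwise ∂ₜc + div(cu) = div( A c ∇(log c + eψ) ). Then at every point of ℝ×ℝ^d: ∂ₜσ(c) + eψ·∂ₜc = −div( c(log c + eψ)u ) + ∇c·u + e c ∇ψ·u + div( A c (log c + eψ) ∇(log c + eψ) ) − A c |∇(log c + eψ)|², where σ(s) = s·log s − s + 1. -/

import Mathlib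

open MeasureTheory

/-- Spatial partial derivative in direction `i` of `g : ℝ^d → ℝ` at `x`. -/
noncomputable def pd (d : ℕ) (i : Fin d) (g : (Fin d → ℝ) → ℝ) (x : Fin d → ℝ) : ℝ :=
  fderiv ℝ g x (Pi.single i 1)

/-- `σ(s) = s log s − s + 1`. -/
noncomputable def sig (s : ℝ) : ℝ := s * Real.log s - s + 1

lemma pd_mul {d : ℕ} (j : Fin d) {f g : (Fin d → ℝ) → ℝ} {x : Fin d → ℝ}
    (hf : DifferentiableAt ℝ f x) (hg : DifferentiableAt ℝ g x) :
    pd d j (fun y => f y * g y) x = pd d j f x * g x + f x * pd d j g x := by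
  unfold pd
  rw [fderiv_fun_mul hf hg]
  simp only [ContinuousLinearMap.add_apply, ContinuousLinearMap.smul_apply, smul_eq_mul]
  ring

lemma pd_add {d : ℕ} (j : Fin d) {f g : (Fin d → ℝ) → ℝ} {x : Fin d → ℝ}
    (hf : DifferentiableAt ℝ f x) (hg : DifferentiableAt ℝ g x) :
    pd d j (fun y => f y + g y) x = pd d j f x + pd d j g x := by
  unfold pd
  rw [fderiv_fun_add hf hg]
  simp

lemma pd_const_mul {d : ℕ} (j : Fin d) {f : (Fin d → ℝ) → ℝ} {x : Fin d → ℝ}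
    (hf : DifferentiableAt ℝ f x) (a : ℝ) :
    pd d j (fun y => a * f y) x = a * pd d j f x := by
  unfold pd
  rw [fderiv_const_mul hf a]
  simp

lemma pd_log {d : ℕ} (j : Fin d) {f : (Fin d → ℝ) → ℝ} {x : Fin d → ℝ}
    (hf : DifferentiableAt ℝ f x) (h0 : f x ≠ 0) :
    pd d j (fun y => Real.log (f y)) x = pd d j f x / f x := by
  unfold pd
  rw [(hf.hasFDerivAt.log h0).fderiv]
  simp [div_eq_inv_mul]

lemma hasDerivAt_sig {s : ℝ} (hs : 0 < s) : HasDerivAt sig (Real.log s) s := by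
  have h1 : HasDerivAt (fun y : ℝ => y * Real.log y) (1 * Real.log s + s * s⁻¹) s :=
    (hasDerivAt_id s).mul (Real.hasDerivAt_log hs.ne')
  have h2 := (h1.sub (hasDerivAt_id s)).add_const 1
  rw [show Real.log s = 1 * Real.log s + s * s⁻¹ - 1 by rw [one_mul, mul_inv_cancel₀ hs.ne']; ring]
  exact h2

/-- entropy identity for one concentration equation. -/
theorem stmt7 (d : ℕ) (hd : 1 ≤ d) (A e : ℝ) (hA : 0 < A)
    (c : ℝ → (Fin d → ℝ) → ℝ) (ψ : ℝ → (Fin d → ℝ) → ℝ)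
    (u : ℝ → (Fin d → ℝ) → Fin d → ℝ)
    (hc : ContDiff ℝ 2 (fun q : ℝ × (Fin d → ℝ) => c q.1 q.2))
    (hcpos : ∀ t x, 0 < c t x)
    (hψx : ∀ t, ContDiff ℝ 2 (ψ t))
    (hψt : ∀ x, ContDiff ℝ 1 (fun t => ψ t x))
    (hu : ContDiff ℝ 1 (fun q : ℝ × (Fin d → ℝ) => u q.1 q.2))
    (heq : ∀ t x,
      deriv (fun s => c s x) t + ∑ j, pd d j (fun y => c t y * u t y j) x
        = ∑ j, pd d j (fun y =>
            A * c t y * pd d j (fun z => Real.log (c t z) + e * ψ t z) y) x) :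
    ∀ t x,
      deriv (fun s => sig (c s x)) t + e * ψ t x * deriv (fun s => c s x) t
        = -(∑ j, pd d j (fun y =>
              c t y * (Real.log (c t y) + e * ψ t y) * u t y j) x)
          + (∑ j, pd d j (c t) x * u t x j)
          + e * c t x * (∑ j, pd d j (ψ t) x * u t x j)
          + (∑ j, pd d j (fun y => A * c t y * (Real.log (c t y) + e * ψ t y) *
              pd d j (fun z => Real.log (c t z) + e * ψ t z) y) x)
          - A * c t x *
            (∑ j, (pd d j (fun y => Real.log (c t y) + e * ψ t y) x) ^ 2) := by
  intro t x
  -- spatial regularity of c t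
  have hc2 : ContDiff ℝ 2 (c t) :=
    hc.comp (contDiff_const.prodMk contDiff_id)
  have hlog : ContDiff ℝ 2 (fun y => Real.log (c t y)) :=
    hc2.log (fun y => (hcpos t y).ne')
  have hwC : ContDiff ℝ 2 (fun y => Real.log (c t y) + e * ψ t y) :=
    hlog.add (contDiff_const.mul (hψx t))
  have huC : ∀ j : Fin d, ContDiff ℝ 1 (fun y => u t y j) := by
    intro j
    exact (contDiff_pi.mp (hu.comp (contDiff_const.prodMk contDiff_id))) j
  have hpdwC : ∀ j : Fin d,
      ContDiff ℝ 1 (fun y => pd d j (fun z => Real.log (c t z) + e * ψ t z) y) := by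
    intro j
    exact ((hwC.fderiv_right (by norm_num)).clm_apply contDiff_const)
  -- pointwise differentiability
  have dc : DifferentiableAt ℝ (c t) x := (hc2.differentiable (by norm_num)) x
  have dlog : DifferentiableAt ℝ (fun y => Real.log (c t y)) x :=
    (hlog.differentiable (by norm_num)) x
  have dψ : DifferentiableAt ℝ (ψ t) x := ((hψx t).differentiable (by norm_num)) x
  have deψ : DifferentiableAt ℝ (fun y => e * ψ t y) x := (differentiableAt_const e).mul dψ
  have dw : DifferentiableAt ℝ (fun y => Real.log (c t y) + e * ψ t y) x := dlog.add deψ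
  have du : ∀ j : Fin d, DifferentiableAt ℝ (fun y => u t y j) x := fun j =>
    ((huC j).differentiable one_ne_zero) x
  have dpdw : ∀ j : Fin d,
      DifferentiableAt ℝ (fun y => pd d j (fun z => Real.log (c t z) + e * ψ t z) y) x :=
    fun j => ((hpdwC j).differentiable one_ne_zero) x
  have dcw : DifferentiableAt ℝ (fun y => c t y * (Real.log (c t y) + e * ψ t y)) x :=
    dc.mul dw
  have dAc : DifferentiableAt ℝ (fun y => A * c t y) x := (differentiableAt_const A).mul dc
  have dAcw : DifferentiableAt ℝ
      (fun y => A * c t y * (Real.log (c t y) + e * ψ t y)) x := dAc.mul dw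
  -- time derivative of sig ∘ c
  have hdifft : DifferentiableAt ℝ (fun s : ℝ => c s x) t := by
    have h1 : DifferentiableAt ℝ (fun q : ℝ × (Fin d → ℝ) => c q.1 q.2) (t, x) :=
      (hc.differentiable (by norm_num)) (t, x)
    exact h1.comp t ((differentiableAt_id : DifferentiableAt ℝ (id : ℝ → ℝ) t).prodMk (differentiableAt_const x))
  have hct' : HasDerivAt (fun s : ℝ => c s x) (deriv (fun s => c s x) t) t :=
    hdifft.hasDerivAt
  have h_sig : deriv (fun s => sig (c s x)) t
      = Real.log (c t x) * deriv (fun s => c s x) t :=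
    by have := ((hasDerivAt_sig (hcpos t x)).comp t hct').deriv; exact this
  -- expansion of the transport term
  have e1 : (∑ j, pd d j (fun y =>
        c t y * (Real.log (c t y) + e * ψ t y) * u t y j) x)
      = (Real.log (c t x) + e * ψ t x) *
          (∑ j, pd d j (fun y => c t y * u t y j) x)
        + ∑ j, c t x * pd d j (fun z => Real.log (c t z) + e * ψ t z) x * u t x j := by
    rw [Finset.mul_sum, ← Finset.sum_add_distrib]
    refine Finset.sum_congr rfl fun j _ => ?_
    rw [pd_mul j dcw (du j), pd_mul j dc dw, pd_mul j dc (du j)]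
    ring
  -- expansion of the diffusion term
  have e4 : (∑ j, pd d j (fun y => A * c t y * (Real.log (c t y) + e * ψ t y) *
        pd d j (fun z => Real.log (c t z) + e * ψ t z) y) x)
      = (Real.log (c t x) + e * ψ t x) *
          (∑ j, pd d j (fun y =>
            A * c t y * pd d j (fun z => Real.log (c t z) + e * ψ t z) y) x)
        + A * c t x *
          (∑ j, (pd d j (fun y => Real.log (c t y) + e * ψ t y) x) ^ 2) := by
    rw [Finset.mul_sum, Finset.mul_sum, ← Finset.sum_add_distrib]
    refine Finset.sum_congr rfl fun j _ => ?_
    rw [pd_mul j dAcw (dpdw j), pd_mul j dAc dw, pd_mul j dAc (dpdw j)]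
    ring
  -- relation between ∇w and ∇c, ∇ψ
  have e5 : (∑ j, c t x * pd d j (fun z => Real.log (c t z) + e * ψ t z) x * u t x j)
      = (∑ j, pd d j (c t) x * u t x j)
        + e * c t x * (∑ j, pd d j (ψ t) x * u t x j) := by
    rw [Finset.mul_sum, ← Finset.sum_add_distrib]
    refine Finset.sum_congr rfl fun j _ => ?_
    rw [pd_add j dlog deψ, pd_log j dc (hcpos t x).ne', pd_const_mul j dψ e]
    field_simp [(hcpos t x).ne']
  rw [h_sig, e1, e4]
  linear_combination (Real.log (c t x) + e * ψ t x) * heq t x + e5
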